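/- arXiv:math/0507407 — 6 statements merged into one kernel-verified Lean document; each statement's English description precedes it below -/
import Mathlib

section
/- Let R be a discrete valuation ring with fraction field Q, let A be a commutative R-algebra, and let G be a finite group acting on A by R-algebra automorphisms, with fixed subring A^G. Endow A ⊗_R Q with the G-action given by g ⊗ id. Then the canonical Q-algebra homomorphism A^G ⊗_R Q → (A ⊗_R Q)^G is an isomorphism; i.e., taking fixed rings under a finite group commutes with base change to the fraction field. -/
/-!
The fixed subring `A^G` is the kernel of the `R`-linear map `A → ∏_{g ∈ G} A`,
`a ↦ (g • a - a)_g`. The fraction field `Q` is a localization of `R`, hence flat, so `- ⊗[R] Q`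
preserves this kernel; since `G` is finite, it also commutes with the product, and the kernel of
the base-changed map is exactly `(A ⊗[R] Q)^G`.
-/

open TensorProduct

/-- The fixed subalgebra `A^G` of an action of a group `G` on a commutative `R`-algebra `A`
by `R`-algebra automorphisms, given by `ρ : G →* (A ≃ₐ[R] A)`. -/
def fixedSubalgebra {R A : Type*} [CommRing R] [CommRing A] [Algebra R A]
    {G : Type*} [Group G] (ρ : G →* (A ≃ₐ[R] A)) : Subalgebra R A where
  carrier := {a | ∀ g : G, ρ g a = a}
  mul_mem' := by intro a b ha hb g; rw [map_mul, ha g, hb g]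
  add_mem' := by intro a b ha hb g; rw [map_add, ha g, hb g]
  algebraMap_mem' := by intro r g; rw [AlgEquiv.commutes]

theorem TensorProduct.eq_zero_iff_forall_rTensor_proj_eq_zero {R : Type*} [CommSemiring R]
    {ι : Type*} [Finite ι] {M : ι → Type*} [∀ i, AddCommMonoid (M i)] [∀ i, Module R (M i)]
    {N : Type*} [AddCommMonoid N] [Module R N] (x : (∀ i, M i) ⊗[R] N) :
    x = 0 ↔ ∀ i, (LinearMap.proj i : (∀ i, M i) →ₗ[R] M i).rTensor N x = 0 := by
  classical
  have := Fintype.ofFinite ι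
  have hpiLeft (i : ι) :
      piLeft R N M x i = (LinearMap.proj i : (∀ i, M i) →ₗ[R] M i).rTensor N x := by
    induction x with
    | zero => simp
    | tmul m n => simp
    | add x y hx hy => simp_all
  rw [← (piLeft R N M).map_eq_zero_iff, funext_iff]
  simp only [hpiLeft, Pi.zero_apply]

section FixedPoints

variable {R A G : Type*} [CommRing R] [CommRing A] [Algebra R A] [Group G]
  (ρ : G →* (A ≃ₐ[R] A))

/-- The differential `C⁰(G, A) → C¹(G, A)` of the inhomogeneous cochain complex of `G`. -/
def dZero : A →ₗ[R] G → A :=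
  LinearMap.pi fun g ↦ (ρ g).toLinearMap - LinearMap.id

@[simp]
theorem dZero_apply (a : A) (g : G) : dZero ρ a g = ρ g a - a := rfl

theorem exact_fixedSubalgebra_val_dZero :
    Function.Exact (fixedSubalgebra ρ).val.toLinearMap (dZero ρ) := by
  intro a
  simp only [funext_iff, dZero_apply, Pi.zero_apply, sub_eq_zero]
  exact ⟨fun h ↦ ⟨⟨a, h⟩, rfl⟩, by rintro ⟨b, rfl⟩; exact b.2⟩

variable (Q : Type*) [Ring Q] [Algebra R Q]

theorem rTensor_dZero_eq_zero_iff [Finite G] (x : A ⊗[R] Q) :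
    (dZero ρ).rTensor Q x = 0 ↔
      ∀ g : G, Algebra.TensorProduct.map (ρ g).toAlgHom (AlgHom.id R Q) x = x := by
  rw [TensorProduct.eq_zero_iff_forall_rTensor_proj_eq_zero]
  refine forall_congr' fun g ↦ ?_
  have hproj : LinearMap.proj g ∘ₗ dZero ρ = (ρ g).toLinearMap - LinearMap.id := rfl
  rw [← LinearMap.rTensor_comp_apply, hproj, LinearMap.rTensor_sub, LinearMap.sub_apply,
    LinearMap.rTensor_id_apply, sub_eq_zero]
  -- `Algebra.TensorProduct.map f (AlgHom.id R Q)` unfolds to `f.toLinearMap.rTensor Q`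
  rfl

theorem injective_map_fixedSubalgebra_val [Module.Flat R Q] :
    Function.Injective
      (Algebra.TensorProduct.map (fixedSubalgebra ρ).val (AlgHom.id R Q)) :=
  Module.Flat.rTensor_preserves_injective_linearMap _ Subtype.val_injective

theorem mem_range_map_fixedSubalgebra_val_iff [Module.Flat R Q] [Finite G] (x : A ⊗[R] Q) :
    x ∈ Set.range (Algebra.TensorProduct.map (fixedSubalgebra ρ).val (AlgHom.id R Q)) ↔
      ∀ g : G, Algebra.TensorProduct.map (ρ g).toAlgHom (AlgHom.id R Q) x = x :=
  (Module.Flat.rTensor_exact Q (exact_fixedSubalgebra_val_dZero ρ) x).symm.trans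
    (rTensor_dZero_eq_zero_iff ρ Q x)

end FixedPoints

theorem fixedPoints_tensor_fractionField_general
    {R : Type*} [CommRing R]
    (Q : Type*) [Field Q] [Algebra R Q] [IsFractionRing R Q]
    {A : Type*} [CommRing A] [Algebra R A]
    {G : Type*} [Group G] [Finite G] (ρ : G →* (A ≃ₐ[R] A)) :
    Function.Injective
      (Algebra.TensorProduct.map (fixedSubalgebra ρ).val (AlgHom.id R Q)) ∧
    ∀ x : A ⊗[R] Q,
      (x ∈ Set.range (Algebra.TensorProduct.map (fixedSubalgebra ρ).val (AlgHom.id R Q)) ↔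
        ∀ g : G, Algebra.TensorProduct.map (ρ g).toAlgHom (AlgHom.id R Q) x = x) := by
  have : Module.Flat R Q := IsLocalization.flat Q (nonZeroDivisors R)
  exact ⟨injective_map_fixedSubalgebra_val ρ Q, mem_range_map_fixedSubalgebra_val_iff ρ Q⟩

/-- Let `R` be a discrete valuation ring with fraction field `Q`, let `A` be a
commutative `R`-algebra and let a finite group `G` act on `A` by `R`-algebra automorphisms.
Endow `A ⊗[R] Q` with the `G`-action `g ⊗ id`. Then the canonical algebra homomorphism
`A^G ⊗[R] Q → A ⊗[R] Q` is injective with image exactly the fixed points `(A ⊗[R] Q)^G`;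
i.e. `A^G ⊗[R] Q → (A ⊗[R] Q)^G` is an isomorphism. -/
theorem fixedPoints_tensor_fractionField
    {R : Type*} [CommRing R] [IsDomain R] [IsDiscreteValuationRing R]
    (Q : Type*) [Field Q] [Algebra R Q] [IsFractionRing R Q]
    {A : Type*} [CommRing A] [Algebra R A]
    {G : Type*} [Group G] [Finite G] (ρ : G →* (A ≃ₐ[R] A)) :
    Function.Injective
      (Algebra.TensorProduct.map (fixedSubalgebra ρ).val (AlgHom.id R Q)) ∧
    ∀ x : A ⊗[R] Q,
      (x ∈ Set.range (Algebra.TensorProduct.map (fixedSubalgebra ρ).val (AlgHom.id R Q)) ↔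
        ∀ g : G, Algebra.TensorProduct.map (ρ g).toAlgHom (AlgHom.id R Q) x = x) :=
  fixedPoints_tensor_fractionField_general Q ρ
end

section
/- Let G be a group acting on a topological space X, and let N be a subgroup of G of finite index. Call a point x ∈ X a limit point of a subgroup H ≤ G if there exist a point y ∈ X and a sequence (hₙ) of pairwise distinct elements of H such that the sequence hₙ·y converges to x. Then the set of limit points of N equals the set of limit points of G. -/
/-!
A subgroup of finite index has finitely many right cosets, so any sequence `gₙ` in `G` has a
subsequence lying in a single right coset `N c⁻¹`. Then `gₙ • y = (gₙ c) • (c⁻¹ • y)` with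
`gₙ c ∈ N`, which exhibits a limit point of `G` as a limit point of `N` without any continuity
of the action.
-/

/-- The set of limit points of a subgroup `H` of `G` acting on a topological space `X`:
points `x` such that some injective sequence `(hₙ)` in `H` and some point `y` satisfy
`hₙ • y → x`. -/
def Subgroup.limitPoints {G : Type*} [Group G] (X : Type*) [TopologicalSpace X]
    [MulAction G X] (H : Subgroup G) : Set X :=
  {x | ∃ y : X, ∃ h : ℕ → H, Function.Injective h ∧
    Filter.Tendsto (fun n => (h n : G) • y) Filter.atTop (nhds x)}

open Filter Topology

namespace Subgroup

variable {G : Type*} [Group G]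

theorem mem_limitPoints_iff (X : Type*) [TopologicalSpace X] [MulAction G X] (H : Subgroup G)
    (x : X) :
    x ∈ H.limitPoints X ↔ ∃ y : X, ∃ g : ℕ → G, Function.Injective g ∧ (∀ n, g n ∈ H) ∧
      Tendsto (fun n => g n • y) atTop (𝓝 x) := by
  constructor
  · rintro ⟨y, h, hinj, htend⟩
    exact ⟨y, fun n => h n, Subtype.val_injective.comp hinj, fun n => (h n).2, htend⟩
  · rintro ⟨y, g, hinj, hmem, htend⟩
    exact ⟨y, fun n => ⟨g n, hmem n⟩, fun m n hmn => hinj (congrArg Subtype.val hmn), htend⟩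

theorem limitPoints_mono (X : Type*) [TopologicalSpace X] [MulAction G X] {H K : Subgroup G}
    (hHK : H ≤ K) : H.limitPoints X ⊆ K.limitPoints X := by
  intro x hx
  obtain ⟨y, g, hinj, hmem, htend⟩ := (mem_limitPoints_iff X H x).1 hx
  exact (mem_limitPoints_iff X K x).2 ⟨y, g, hinj, fun n => hHK (hmem n), htend⟩

theorem exists_strictMono_mul_mem_of_finiteIndex (N : Subgroup G) [N.FiniteIndex] (g : ℕ → G) :
    ∃ c : G, ∃ φ : ℕ → ℕ, StrictMono φ ∧ ∀ n, g (φ n) * c ∈ N := by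
  -- pigeonhole on the left cosets of `(gₙ)⁻¹`, i.e. on the right cosets of `gₙ`
  have hfreq : ∃ᶠ n in atTop, ∃ q : G ⧸ N, (((g n)⁻¹ : G) : G ⧸ N) = q :=
    Frequently.of_forall fun n => ⟨_, rfl⟩
  obtain ⟨q, hq⟩ := frequently_exists.1 hfreq
  obtain ⟨φ, hφ, hφq⟩ := extraction_of_frequently_atTop hq
  obtain ⟨c, rfl⟩ := QuotientGroup.mk_surjective q
  refine ⟨c, φ, hφ, fun n => ?_⟩
  simpa using QuotientGroup.eq.1 (hφq n)

theorem top_limitPoints_subset_of_finiteIndex (X : Type*) [TopologicalSpace X] [MulAction G X]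
    (N : Subgroup G) [N.FiniteIndex] : (⊤ : Subgroup G).limitPoints X ⊆ N.limitPoints X := by
  intro x hx
  obtain ⟨y, g, hinj, -, htend⟩ := (mem_limitPoints_iff X ⊤ x).1 hx
  obtain ⟨c, φ, hφ, hmem⟩ := N.exists_strictMono_mul_mem_of_finiteIndex g
  refine (mem_limitPoints_iff X N x).2
    ⟨c⁻¹ • y, fun n => g (φ n) * c, ?_, hmem, ?_⟩
  · exact (mul_left_injective c).comp (hinj.comp hφ.injective)
  · simpa only [mul_smul, smul_inv_smul, Function.comp_def] using htend.comp hφ.tendsto_atTop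

end Subgroup

/-- Let `G` be a group acting on a topological space `X` and let `N ≤ G` be a
subgroup of finite index. Then the limit points of `N` coincide with the limit points of `G`
(i.e. of the full subgroup `⊤`). -/
theorem limitPoints_eq_of_finiteIndex {G : Type*} [Group G] (X : Type*) [TopologicalSpace X]
    [MulAction G X] (N : Subgroup G) (hN : N.FiniteIndex) :
    N.limitPoints X = (⊤ : Subgroup G).limitPoints X :=
  (N.limitPoints_mono X le_top).antisymm (N.top_limitPoints_subset_of_finiteIndex X)
end

section
/- Let S, S′, S″ be topological spaces with S locally path-connected, S′ nonempty, and S″ connected and locally path-connected. Let f : S′ → S and g : S″ → S be surjective covering maps, and let φ : S′ → S″ be a continuous map satisfying g ∘ φ = f. Then φ is a surjective covering map. -/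
/-!
Over a connected open set `U` on which both `f` and `g` are trivial, each sheet of `f` is a
connected lift of `U`, so `φ` maps it into a single sheet of `g`; in these coordinates `φ` is
`id × τ` for a map `τ` of discrete fibres. Hence the sheet of `g` indexed by `j` is evenly
covered by `φ`, with fibre `τ⁻¹(j)`. A covering map in Mathlib's sense may have empty fibres,
but its range is clopen, so `φ` is onto because `S''` is connected and `S'` is nonempty.
-/

open Set Topology Bundle

namespace Bundle.Trivialization

section

variable {B F Z : Type*} [TopologicalSpace B] [TopologicalSpace F] [TopologicalSpace Z]
  {proj : Z → B} (e : Trivialization F proj)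

def sheet (U : Set B) (j : F) : Set Z := proj ⁻¹' U ∩ (fun z ↦ (e z).2) ⁻¹' {j}

theorem isOpen_sheet [DiscreteTopology F] {U : Set B} (hUo : IsOpen U) (hU : U ⊆ e.baseSet)
    (j : F) : IsOpen (e.sheet U j) := by
  have hsource : IsOpen (proj ⁻¹' U) := by
    simpa [inter_eq_right.2 (e.preimage_subset_source hU)] using
      e.continuousOn_proj.isOpen_inter_preimage e.open_source hUo
  exact (continuous_snd.comp_continuousOn (e.toOpenPartialHomeomorph.continuousOn.mono
    (e.preimage_subset_source hU))).isOpen_inter_preimage hsource (isOpen_discrete _)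

theorem injOn_sheet {U : Set B} (hU : U ⊆ e.baseSet) (j : F) : InjOn proj (e.sheet U j) :=
  fun z hz z' hz' h ↦ e.injOn (e.mem_source.2 (hU hz.1)) (e.mem_source.2 (hU hz'.1)) <|
    Prod.ext (show (e z).1 = (e z').1 by rw [e.coe_fst' (hU hz.1), e.coe_fst' (hU hz'.1), h])
      (hz.2.trans hz'.2.symm)

end

section

variable {X E Y I J : Type*} [TopologicalSpace X] [TopologicalSpace E] [TopologicalSpace Y]
  [TopologicalSpace I] [TopologicalSpace J] {f : E → X} {g : Y → X} {φ : E → Y}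
  (ef : Trivialization I f) (eg : Trivialization J g) {U : Set X}

theorem snd_apply_comp_symm_eq_of_isPreconnected [DiscreteTopology J] (hφ : Continuous φ)
    (hcomm : g ∘ φ = f) (hU : IsPreconnected U) (hUf : U ⊆ ef.baseSet) (hUg : U ⊆ eg.baseSet)
    (i : I) {u u' : X} (hu : u ∈ U) (hu' : u' ∈ U) :
    (eg (φ (ef.toOpenPartialHomeomorph.symm (u, i)))).2 =
      (eg (φ (ef.toOpenPartialHomeomorph.symm (u', i)))).2 := by
  refine hU.constant (f := fun u ↦ (eg (φ (ef.toOpenPartialHomeomorph.symm (u, i)))).2) ?_ hu hu'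
  have hmaps : MapsTo (fun u ↦ φ (ef.toOpenPartialHomeomorph.symm (u, i))) U eg.source :=
    fun u hu ↦ by
      rw [eg.mem_source, ← Function.comp_apply (f := g), hcomm, ef.proj_symm_apply' (hUf hu)]
      exact hUg hu
  exact continuous_snd.comp_continuousOn <| eg.toOpenPartialHomeomorph.continuousOn.comp
    (hφ.comp_continuousOn (ef.continuousOn_symm_prodMk_left.mono hUf)) hmaps

theorem isEvenlyCovered_of_comp_eq [DiscreteTopology I] [DiscreteTopology J] (hφ : Continuous φ)
    (hcomm : g ∘ φ = f) (hUo : IsOpen U) (hU : IsPreconnected U)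
    (hUf : U ⊆ ef.baseSet) (hUg : U ⊆ eg.baseSet) {y : Y} (hy : g y ∈ U) :
    IsEvenlyCovered φ y (φ ⁻¹' {y}) := by
  have hgφ : ∀ x, g (φ x) = f x := congrFun hcomm
  have hsnd := ef.snd_apply_comp_symm_eq_of_isPreconnected eg hφ hcomm hU hUf hUg
  set V := eg.sheet U (eg y).2
  -- `K` is `τ⁻¹(j)` for `j = (eg y).2`, with `τ` read off over the base point `g y`
  let K := {i : I // (eg (φ (ef.toOpenPartialHomeomorph.symm (g y, i)))).2 = (eg y).2}
  have hV : IsOpen V := eg.isOpen_sheet hUo hUg _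
  have hfV : ∀ x, φ x ∈ V → f x ∈ U := fun x hx ↦ hgφ x ▸ hx.1
  have hmemK : ∀ x, φ x ∈ V →
      (eg (φ (ef.toOpenPartialHomeomorph.symm (g y, (ef x).2)))).2 = (eg y).2 := by
    intro x hx
    rw [← hsnd _ (hfV x hx) hy, ef.symm_apply_mk_proj (ef.mem_source.2 (hUf (hfV x hx)))]
    exact hx.2
  have hsymmV : ∀ v ∈ V, ∀ k : K, φ (ef.toOpenPartialHomeomorph.symm (g v, k)) ∈ V := by
    intro v hv k
    refine ⟨?_, (hsnd _ hv.1 hy).trans k.2⟩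
    rw [mem_preimage, hgφ, ef.proj_symm_apply' (hUf hv.1)]
    exact hv.1
  refine IsEvenlyCovered.to_isEvenlyCovered_preimage (I := K)
    ⟨inferInstance, V, ⟨hy, rfl⟩, hV, hV.preimage hφ,
  { toFun x := (⟨φ x, x.2⟩, ⟨(ef x).2, hmemK x x.2⟩)
    invFun p := ⟨ef.toOpenPartialHomeomorph.symm (g p.1, p.2), hsymmV p.1 p.1.2 p.2⟩
    left_inv x := Subtype.ext <| by
      simp only [hgφ]
      exact ef.symm_apply_mk_proj (ef.mem_source.2 (hUf (hfV x x.2)))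
    right_inv p := by
      refine Prod.ext (Subtype.ext ?_) (Subtype.ext ?_)
      · exact eg.injOn_sheet hUg _ (hsymmV _ p.1.2 p.2) p.1.2
          (by rw [hgφ, ef.proj_symm_apply' (hUf p.1.2.1)])
      · simp only [ef.apply_symm_apply' (hUf p.1.2.1)]
    continuous_toFun := by
      have : Continuous fun x : φ ⁻¹' V ↦ (ef x).2 :=
        continuous_snd.comp <| ef.toOpenPartialHomeomorph.continuousOn.comp_continuous
          continuous_subtype_val fun x ↦ ef.mem_source.2 (hUf (hfV x x.2))
      fun_prop
    continuous_invFun :=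
      (ef.toOpenPartialHomeomorph.continuousOn_symm.comp_continuous
        ((eg.continuousOn_proj.comp_continuous (continuous_subtype_val.comp continuous_fst)
          fun p ↦ eg.mem_source.2 (hUg p.1.2.1)).prodMk
          (continuous_subtype_val.comp continuous_snd))
        fun p ↦ ef.mem_target.2 (hUf p.1.2.1)).subtype_mk _ }, fun _ ↦ rfl⟩

end

end Bundle.Trivialization

namespace IsCoveringMap

variable {X E Y : Type*} [TopologicalSpace X] [TopologicalSpace E] [TopologicalSpace Y]
  {f : E → X}

theorem isClopen_range (hf : IsCoveringMap f) : IsClopen (range f) := by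
  refine ⟨isOpen_compl_iff.1 <| isOpen_iff_forall_mem_open.2 fun x hx ↦ ?_,
    hf.isOpenMap.isOpen_range⟩
  obtain ⟨-, U, hxU, hU, -, H, -⟩ := hf x
  have : IsEmpty (f ⁻¹' {x}) := ⟨fun e ↦ hx ⟨e, e.2⟩⟩
  exact ⟨U, fun _ hx' ⟨e, he⟩ ↦ isEmptyElim (H ⟨e, by rwa [mem_preimage, he]⟩).2,
    hU, hxU⟩

theorem surjective [PreconnectedSpace X] [Nonempty E] (hf : IsCoveringMap f) :
    Function.Surjective f :=
  range_eq_univ.1 (hf.isClopen_range.eq_univ (range_nonempty f))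

theorem of_comp_eq [LocallyConnectedSpace X] {g : Y → X} {φ : E → Y}
    (hf : IsCoveringMap f) (hfsurj : Function.Surjective f) (hg : IsCoveringMap g)
    (hφ : Continuous φ) (hcomm : g ∘ φ = f) : IsCoveringMap φ := by
  intro y
  have := (hf (g y)).1
  have := (hg (g y)).1
  have : Nonempty (f ⁻¹' {g y}) := let ⟨x, hx⟩ := hfsurj (g y); ⟨⟨x, hx⟩⟩
  have : Nonempty (g ⁻¹' {g y}) := ⟨⟨y, rfl⟩⟩
  let ef := (hf (g y)).toTrivialization
  let eg := (hg (g y)).toTrivialization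
  have hy : g y ∈ ef.baseSet ∩ eg.baseSet :=
    ⟨(hf (g y)).mem_toTrivialization_baseSet, (hg (g y)).mem_toTrivialization_baseSet⟩
  have hUsub := connectedComponentIn_subset (ef.baseSet ∩ eg.baseSet) (g y)
  exact ef.isEvenlyCovered_of_comp_eq eg hφ hcomm
    (ef.open_baseSet.inter eg.open_baseSet).connectedComponentIn
    isPreconnected_connectedComponentIn (hUsub.trans inter_subset_left)
    (hUsub.trans inter_subset_right) (mem_connectedComponentIn hy)

end IsCoveringMap

theorem covering_of_factor_through_covering_general
    {S S' S'' : Type*} [TopologicalSpace S] [TopologicalSpace S'] [TopologicalSpace S'']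
    [LocallyPathConnectedSpace S] [Nonempty S'] [ConnectedSpace S'']
    (f : S' → S) (g : S'' → S) (φ : S' → S'')
    (hf : IsCoveringMap f) (hfsurj : Function.Surjective f)
    (hg : IsCoveringMap g)
    (hφ : Continuous φ) (hcomm : g ∘ φ = f) :
    IsCoveringMap φ ∧ Function.Surjective φ := by
  have hφcov := IsCoveringMap.of_comp_eq hf hfsurj hg hφ hcomm
  exact ⟨hφcov, hφcov.surjective⟩

/-- Let `S, S', S''` be topological spaces with `S` locally path-connected,
`S'` nonempty, and `S''` connected and locally path-connected. Let `f : S' → S` and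
`g : S'' → S` be surjective covering maps, and let `φ : S' → S''` be continuous with
`g ∘ φ = f`. Then `φ` is a surjective covering map. -/
theorem covering_of_factor_through_covering
    {S S' S'' : Type*} [TopologicalSpace S] [TopologicalSpace S'] [TopologicalSpace S'']
    [LocallyPathConnectedSpace S] [Nonempty S'] [ConnectedSpace S''] [LocallyPathConnectedSpace S'']
    (f : S' → S) (g : S'' → S) (φ : S' → S'')
    (hf : IsCoveringMap f) (hfsurj : Function.Surjective f)
    (hg : IsCoveringMap g) (hgsurj : Function.Surjective g)
    (hφ : Continuous φ) (hcomm : g ∘ φ = f) :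
    IsCoveringMap φ ∧ Function.Surjective φ :=
  covering_of_factor_through_covering_general f g φ hf hfsurj hg hφ hcomm
end

section
/- Let K be a field and let O be a valuation subring of K (so O is an integrally closed subring of K whose fraction field is K). Let M be an n × n matrix with entries in K. Then M is conjugate over K to a matrix with all entries in O — i.e., there exists an invertible matrix P ∈ GLₙ(K) such that every entry of P·M·P⁻¹ lies in O — if and only if every coefficient of the characteristic polynomial of M lies in O. -/
/-!
If `P M P⁻¹` has entries in `O`, its characteristic polynomial, which is that of `M`, is the image
of a polynomial over `O`. Conversely, if the characteristic polynomial of `M` lies in `O[X]`,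
Cayley–Hamilton makes `M` integral over `O`, so `O[M]` is a finitely generated `O`-module and
`L = O[M] · Oⁿ` is an `M`-stable `O`-lattice in `Kⁿ`. A finitely generated torsion-free module over
a valuation ring is flat, hence free, so `L` has an `O`-basis. That basis is a `K`-basis of `Kⁿ`, and
the matrix of `M` in it has entries in `O`.
-/

open Polynomial Matrix Module

theorem Module.free_of_isTorsionFree_of_valuationRing {R M : Type*} [CommRing R] [IsDomain R]
    [ValuationRing R] [AddCommGroup M] [Module R M] [Module.Finite R M] [IsTorsionFree R M] :
    Module.Free R M :=
  have : Flat R M :=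
    Flat.flat_iff_torsion_eq_bot_of_isBezout.mpr
      (Submodule.isTorsionFree_iff_torsion_eq_bot.mp ‹_›)
  Module.free_of_flat_of_isLocalRing

theorem Matrix.isIntegral_of_charpoly_coeff_mem_range {R K : Type*} [CommRing R] [CommRing K]
    [Algebra R K] {n : Type*} [Fintype n] [DecidableEq n] (M : Matrix n n K)
    (h : ∀ k, M.charpoly.coeff k ∈ (algebraMap R K).range) : IsIntegral R M := by
  obtain ⟨p, hp, -, hmonic⟩ := lifts_and_natDegree_eq_and_monic
    ((lifts_iff_coeff_lifts _).mpr h) M.charpoly_monic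
  exact ⟨p, hmonic, by rw [← aeval_def, ← aeval_map_algebraMap K, hp]; exact aeval_self_charpoly M⟩

theorem Matrix.exists_isLattice_le_comap_mulVec_of_isIntegral {R K : Type*} [CommRing R]
    [CommRing K] [Algebra R K] {n : Type*} [Fintype n] [DecidableEq n] {M : Matrix n n K}
    (hM : IsIntegral R M) :
    ∃ L : Submodule R (n → K), L.IsLattice K ∧ L ≤ L.comap (mulVecBilin R R M) := by
  set L := Submodule.map₂ (mulVecBilin R R) (Algebra.adjoin R {M}).toSubmodule
    (Submodule.span R (Set.range (Pi.basisFun K n)))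
  have hbasis : Set.range (Pi.basisFun K n) ⊆ L := by
    rintro _ ⟨i, rfl⟩
    have := Submodule.apply_mem_map₂ (mulVecBilin R R)
      (Subalgebra.mem_toSubmodule _ |>.mpr (Subalgebra.one_mem (Algebra.adjoin R {M})))
      (Submodule.subset_span (Set.mem_range_self (f := Pi.basisFun K n) i))
    rwa [mulVecBilin_apply, one_mulVec] at this
  refine ⟨L, ⟨hM.fg_adjoin_singleton.map₂ _ (Submodule.fg_span (Set.finite_range _)), ?_⟩, ?_⟩
  · exact eq_top_iff.mpr ((Pi.basisFun K n).span_eq.ge.trans (Submodule.span_mono hbasis))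
  · refine Submodule.map₂_le.mpr fun A hA v hv => ?_
    rw [Submodule.mem_comap, mulVecBilin_apply, mulVecBilin_apply, mulVec_mulVec]
    exact Submodule.apply_mem_map₂ _
      (Subalgebra.mul_mem _ (Algebra.subset_adjoin rfl) hA) hv

theorem Module.Basis.extendOfIsLattice_repr_apply {R K V : Type*} [CommRing R] [Field K]
    [Algebra R K] [IsFractionRing R K] [AddCommGroup V] [Module K V] [Module R V]
    [IsScalarTower R K V] {κ : Type*} {L : Submodule R V} [L.IsLattice K] (b : Basis κ R L)
    (x : L) (k : κ) : (b.extendOfIsLattice K).repr x k = algebraMap R K (b.repr x k) := by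
  have hlin : ((Finsupp.lapply (R := K) k).restrictScalars R ∘ₗ
      ((b.extendOfIsLattice K).repr.toLinearMap.restrictScalars R) ∘ₗ L.subtype) =
      Algebra.linearMap R K ∘ₗ Finsupp.lapply k ∘ₗ b.repr.toLinearMap := by
    refine b.ext fun j => ?_
    have hself := (b.extendOfIsLattice K).repr_self j
    rw [b.extendOfIsLattice_apply K] at hself
    obtain rfl | hjk := eq_or_ne j k
    · simp [hself]
    · simp [hself, hjk]
  exact LinearMap.congr_fun hlin x

theorem Matrix.exists_conj_mem_range_of_isLattice {R K : Type*} [CommRing R] [Field K]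
    [Algebra R K] [IsFractionRing R K] {n : Type*} [Fintype n] [DecidableEq n]
    (M : Matrix n n K) (L : Submodule R (n → K)) [L.IsLattice K] [Module.Free R L]
    (hL : L ≤ L.comap (mulVecBilin R R M)) :
    ∃ P : GL n K, ∀ i j,
      ((P : Matrix n n K) * M * ((P⁻¹ : GL n K) : Matrix n n K)) i j ∈ (algebraMap R K).range := by
  let e := Pi.basisFun K n
  let b₀ := Free.chooseBasis R L
  let b := b₀.reindex ((b₀.extendOfIsLattice K).indexEquiv e)
  let B := b.extendOfIsLattice K
  let P : GL n K := ⟨B.toMatrix e, e.toMatrix B, B.toMatrix_mul_toMatrix_flip e,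
    e.toMatrix_mul_toMatrix_flip B⟩
  refine ⟨P, fun i j => ?_⟩
  have hconj : (P : Matrix n n K) * M * ((P⁻¹ : GL n K) : Matrix n n K) =
      LinearMap.toMatrix B B (toLin' M) := by
    rw [← basis_toMatrix_mul_linearMap_toMatrix_mul_basis_toMatrix (b' := e) (c' := e),
      LinearMap.toMatrix_eq_toMatrix', LinearMap.toMatrix'_toLin']
    rfl
  rw [hconj, LinearMap.toMatrix_apply, toLin'_apply]
  have hmem : M *ᵥ (b j : n → K) ∈ L := hL (b j).2
  refine ⟨b.repr ⟨_, hmem⟩ i, ?_⟩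
  rw [← Basis.extendOfIsLattice_repr_apply, Basis.extendOfIsLattice_apply]

theorem Matrix.charpoly_coeff_mem_range_of_forall_mem_range {R K : Type*} [CommRing R]
    [CommRing K] [Algebra R K] {n : Type*} [Fintype n] [DecidableEq n] {N : Matrix n n K}
    (h : ∀ i j, N i j ∈ (algebraMap R K).range) (k : ℕ) :
    N.charpoly.coeff k ∈ (algebraMap R K).range := by
  choose N' hN' using h
  rw [show N = (Matrix.of N').map (algebraMap R K) from ext fun i j => (hN' i j).symm,
    charpoly_map, coeff_map]
  exact ⟨_, rfl⟩

/-- Let `K` be a field and `O` a valuation subring of `K`. An `n × n` matrix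
`M` over `K` is conjugate over `K` to a matrix with all entries in `O` if and only if all
coefficients of the characteristic polynomial of `M` lie in `O`. -/
theorem conjugate_to_integral_iff_charpoly_integral
    {K : Type*} [Field K] (O : ValuationSubring K) {n : ℕ}
    (M : Matrix (Fin n) (Fin n) K) :
    (∃ P : GL (Fin n) K, ∀ i j : Fin n,
        ((P : Matrix (Fin n) (Fin n) K) * M * ((P⁻¹ : GL (Fin n) K) : Matrix (Fin n) (Fin n) K)) i j ∈ O)
      ↔ ∀ k : ℕ, M.charpoly.coeff k ∈ O := by
  have hO (x : K) : x ∈ (algebraMap O K).range ↔ x ∈ O := by simp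
  simp_rw [← hO]
  constructor
  · rintro ⟨P, hP⟩
    have hconj := charpoly_units_conj P M
    rw [← coe_units_inv] at hconj
    exact hconj ▸ charpoly_coeff_mem_range_of_forall_mem_range hP
  · intro h
    obtain ⟨L, _, hML⟩ :=
      exists_isLattice_le_comap_mulVec_of_isIntegral (isIntegral_of_charpoly_coeff_mem_range M h)
    have : Module.Free O L := free_of_isTorsionFree_of_valuationRing
    exact exists_conj_mem_range_of_isLattice M L hML
end

section
/- Let k be an algebraically closed field of characteristic different from 2, and let A, B be 2 × 2 matrices over k with trace(A) = 0 and trace(B) = 0. Assume trace(A·A) ≠ 0 and trace(A·A)·trace(B·B) ≠ (trace(A·B))². Then there exist an invertible matrix P ∈ GL₂(k) and scalars t, s, c ∈ k with t ≠ 0 and c ≠ 0 such that P·A·P⁻¹ is the diagonal matrix with diagonal entries (t, −t), P·B·P⁻¹ is the matrix with rows (s, 1) and (c, −s), and moreover 2·t² = trace(A·A), 2·t·s = trace(A·B), and 2·(s² + c) = trace(B·B). -/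
/-!
A traceless `A` with `tr(A²) ≠ 0` satisfies `A² = t² • 1` with `t ≠ 0` (Cayley–Hamilton), and
so does `D = diag(t, -t)`; hence `A (A + D) = (A + D) D`, and for the right choice of the sign of
`t` the matrix `A + D` is invertible, conjugating `A` to `D`. The conjugate of `B` is then a
traceless `[[s, u], [v, -s]]`, and the invariants give `tr(AB) = 2ts`, `tr(B²) = 2(s² + uv)`, so
`tr(A²) tr(B²) - tr(AB)² = 4t²uv` forces `uv ≠ 0`. Finally `diag(1, u)` commutes with `D` and
rescales the off-diagonal entries of `B` to `1` and `uv`.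
-/

open Matrix

namespace Matrix

section CommRing

variable {n R : Type*} [Fintype n] [DecidableEq n] [CommRing R]

theorem units_conj_mul (Q P : GL n R) (M : Matrix n n R) :
    ((Q * P : GL n R) : Matrix n n R) * M * (((Q * P)⁻¹ : GL n R) : Matrix n n R) =
      (Q : Matrix n n R) * ((P : Matrix n n R) * M * ((P⁻¹ : GL n R) : Matrix n n R)) *
        ((Q⁻¹ : GL n R) : Matrix n n R) := by
  simp only [_root_.mul_inv_rev, Units.val_mul, mul_assoc]

theorem trace_units_conj_mul_units_conj (P : GL n R) (M N : Matrix n n R) :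
    ((P : Matrix n n R) * M * ((P⁻¹ : GL n R) : Matrix n n R) *
      ((P : Matrix n n R) * N * ((P⁻¹ : GL n R) : Matrix n n R))).trace = (M * N).trace := by
  rw [← trace_units_conj P (M * N)]
  simp only [mul_assoc, Units.inv_mul_cancel_left]

theorem exists_eq_of_trace_eq_zero {M : Matrix (Fin 2) (Fin 2) R} (hM : M.trace = 0) :
    ∃ a b c, M = !![a, b; c, -a] := by
  refine ⟨M 0 0, M 0 1, M 1 0, ?_⟩
  rw [trace_fin_two, add_eq_zero_iff_neg_eq] at hM
  conv_lhs => rw [eta_fin_two M, ← hM]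

theorem traceless_mul_self (a b c : R) :
    !![a, b; c, -a] * !![a, b; c, -a] = (a ^ 2 + b * c) • (1 : Matrix (Fin 2) (Fin 2) R) := by
  rw [mul_fin_two, one_fin_two, smul_of, smul_cons]
  ext i j; fin_cases i <;> fin_cases j <;> simp <;> ring

theorem trace_traceless_mul_self (a b c : R) :
    (!![a, b; c, -a] * !![a, b; c, -a]).trace = 2 * (a ^ 2 + b * c) := by
  rw [mul_fin_two, trace_fin_two]
  simp only [of_apply, cons_val', cons_val_zero, cons_val_one, cons_val_fin_one]
  ring

theorem trace_diag_mul_traceless (t a b c : R) :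
    (!![t, 0; 0, -t] * !![a, b; c, -a]).trace = 2 * t * a := by
  rw [mul_fin_two, trace_fin_two]
  simp only [of_apply, cons_val', cons_val_zero, cons_val_one, cons_val_fin_one]
  ring

end CommRing

section Field

variable {k : Type*} [Field k]

theorem exists_units_conj_traceless_eq_diag [IsAlgClosed k] {A : Matrix (Fin 2) (Fin 2) k}
    (hA : A.trace = 0) (hA2 : (A * A).trace ≠ 0) :
    ∃ (P : GL (Fin 2) k) (t : k), t ≠ 0 ∧
      (P : Matrix (Fin 2) (Fin 2) k) * A * ((P⁻¹ : GL (Fin 2) k) : Matrix (Fin 2) (Fin 2) k)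
        = !![t, 0; 0, -t] ∧ 2 * t ^ 2 = (A * A).trace := by
  obtain ⟨a, b, c, rfl⟩ := exists_eq_of_trace_eq_zero hA
  rw [trace_traceless_mul_self] at hA2 ⊢
  obtain ⟨r, hr⟩ := IsAlgClosed.exists_pow_nat_eq (a ^ 2 + b * c) two_pos
  obtain ⟨t, ht2, hta⟩ : ∃ t, t ^ 2 = a ^ 2 + b * c ∧ t + a ≠ 0 := by
    by_cases hra : r + a = 0
    · refine ⟨-r, by rw [neg_sq, hr], fun hra' => hA2 ?_⟩
      linear_combination (-2) * hr + r * hra - r * hra'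
    · exact ⟨r, hr, hra⟩
  have ht : t ≠ 0 := by
    rintro rfl
    exact hA2 (by rw [← ht2]; ring)
  have h2 : (2 : k) ≠ 0 := left_ne_zero_of_mul hA2
  set D : Matrix (Fin 2) (Fin 2) k := !![t, 0; 0, -t]
  have hsq : !![a, b; c, -a] * !![a, b; c, -a] = D * D := by
    rw [traceless_mul_self, traceless_mul_self, ← ht2]; ring_nf
  have hdet : (!![a, b; c, -a] + D).det ≠ 0 := by
    have : (!![a, b; c, -a] + D).det = -2 * t * (t + a) := by
      rw [det_fin_two]
      simp only [D, of_add_of, add_cons, of_apply, cons_val', cons_val_zero, cons_val_one,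
        cons_val_fin_one, head_cons, tail_cons]
      linear_combination ht2
    rw [this]
    exact mul_ne_zero (mul_ne_zero (neg_ne_zero.2 h2) ht) hta
  refine ⟨(GeneralLinearGroup.mkOfDetNeZero _ hdet)⁻¹, t, ht, ?_, by rw [ht2]⟩
  rw [inv_inv, mul_assoc, Units.inv_mul_eq_iff_eq_mul, GeneralLinearGroup.val_mkOfDetNeZero,
    mul_add, add_mul, hsq, add_comm]

theorem exists_units_conj_diag_traceless_eq (t a b c : k) (hb : b ≠ 0) :
    ∃ Q : GL (Fin 2) k,
      (Q : Matrix (Fin 2) (Fin 2) k) * !![t, 0; 0, -t] *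
        ((Q⁻¹ : GL (Fin 2) k) : Matrix (Fin 2) (Fin 2) k) = !![t, 0; 0, -t] ∧
      (Q : Matrix (Fin 2) (Fin 2) k) * !![a, b; c, -a] *
        ((Q⁻¹ : GL (Fin 2) k) : Matrix (Fin 2) (Fin 2) k) = !![a, 1; b * c, -a] := by
  have hdet : (!![1, 0; 0, b] : Matrix (Fin 2) (Fin 2) k).det ≠ 0 := by simpa [det_fin_two]
  refine ⟨GeneralLinearGroup.mkOfDetNeZero _ hdet, ?_, ?_⟩ <;>
    rw [Units.mul_inv_eq_iff_eq_mul, GeneralLinearGroup.val_mkOfDetNeZero] <;>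
    simp [mul_comm]

end Field

end Matrix

theorem pair_normal_form_general
    {k : Type*} [Field k] [IsAlgClosed k]
    (A B : Matrix (Fin 2) (Fin 2) k)
    (hA : A.trace = 0) (hB : B.trace = 0)
    (hA2 : (A * A).trace ≠ 0)
    (hAB : (A * A).trace * (B * B).trace ≠ ((A * B).trace) ^ 2) :
    ∃ (P : GL (Fin 2) k) (t s c : k), t ≠ 0 ∧ c ≠ 0 ∧
      (P : Matrix (Fin 2) (Fin 2) k) * A * ((P⁻¹ : GL (Fin 2) k) : Matrix (Fin 2) (Fin 2) k)
        = !![t, 0; 0, -t] ∧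
      (P : Matrix (Fin 2) (Fin 2) k) * B * ((P⁻¹ : GL (Fin 2) k) : Matrix (Fin 2) (Fin 2) k)
        = !![s, 1; c, -s] ∧
      2 * t ^ 2 = (A * A).trace ∧
      2 * t * s = (A * B).trace ∧
      2 * (s ^ 2 + c) = (B * B).trace := by
  obtain ⟨P, t, ht, hPA, htA⟩ := exists_units_conj_traceless_eq_diag hA hA2
  obtain ⟨s, u, v, hPB⟩ := exists_eq_of_trace_eq_zero ((trace_units_conj P B).trans hB)
  have htAB : (A * B).trace = 2 * t * s := by
    rw [← trace_units_conj_mul_units_conj P, hPA, hPB, trace_diag_mul_traceless]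
  have htBB : (B * B).trace = 2 * (s ^ 2 + u * v) := by
    rw [← trace_units_conj_mul_units_conj P, hPB, trace_traceless_mul_self]
  have huv : u * v ≠ 0 := fun huv => hAB <| by
    rw [← htA, htAB, htBB]; linear_combination 4 * t ^ 2 * huv
  obtain ⟨Q, hQA, hQB⟩ := exists_units_conj_diag_traceless_eq t s u v (left_ne_zero_of_mul huv)
  refine ⟨Q * P, t, s, u * v, ht, huv, ?_, ?_, htA, htAB.symm, htBB.symm⟩
  · rw [units_conj_mul, hPA, hQA]
  · rw [units_conj_mul, hPB, hQB]

/-- Over an algebraically closed field `k` with `char k ≠ 2`, a pair of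
traceless `2 × 2` matrices `A, B` with `trace (A·A) ≠ 0` and
`trace (A·A)·trace (B·B) ≠ (trace (A·B))²` can be simultaneously conjugated into the normal
form `(diag(t, -t), [[s, 1], [c, -s]])` with `t ≠ 0`, `c ≠ 0`, where
`2t² = trace (A·A)`, `2ts = trace (A·B)` and `2(s² + c) = trace (B·B)`. -/
theorem pair_normal_form
    {k : Type*} [Field k] [IsAlgClosed k] (hchar : (2 : k) ≠ 0)
    (A B : Matrix (Fin 2) (Fin 2) k)
    (hA : A.trace = 0) (hB : B.trace = 0)
    (hA2 : (A * A).trace ≠ 0)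
    (hAB : (A * A).trace * (B * B).trace ≠ ((A * B).trace) ^ 2) :
    ∃ (P : GL (Fin 2) k) (t s c : k), t ≠ 0 ∧ c ≠ 0 ∧
      (P : Matrix (Fin 2) (Fin 2) k) * A * ((P⁻¹ : GL (Fin 2) k) : Matrix (Fin 2) (Fin 2) k)
        = !![t, 0; 0, -t] ∧
      (P : Matrix (Fin 2) (Fin 2) k) * B * ((P⁻¹ : GL (Fin 2) k) : Matrix (Fin 2) (Fin 2) k)
        = !![s, 1; c, -s] ∧
      2 * t ^ 2 = (A * A).trace ∧
      2 * t * s = (A * B).trace ∧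
      2 * (s ^ 2 + c) = (B * B).trace :=
  pair_normal_form_general A B hA hB hA2 hAB
end

section
/- Let g ≥ 1 and let G be the free product of g + 1 copies of the cyclic group of order 2, with canonical generators s₀, s₁, …, s_g (each of order 2). Let φ : G → ℤ/2ℤ be the group homomorphism sending every sᵢ to the nontrivial element. Then the kernel of φ is a free group of rank g, freely generated by the g elements s₁s₀, s₂s₀, …, s_g s₀; that is, there is a group isomorphism from the free group on g generators onto ker φ sending the i-th free generator to sᵢs₀. -/
/-- The free product of `g + 1` copies of `ℤ/2ℤ`. -/
abbrev FreeProdZ2 (g : ℕ) : Type :=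
  Monoid.CoprodI (fun _ : Fin (g + 1) => Multiplicative (ZMod 2))

/-- The canonical generator `sᵢ` of the `i`-th factor of the free product. -/
def sGen (g : ℕ) (i : Fin (g + 1)) : FreeProdZ2 g :=
  Monoid.CoprodI.of (i := i) (Multiplicative.ofAdd (1 : ZMod 2))

/-- The homomorphism `φ : G → ℤ/2ℤ` sending every generator `sᵢ` to the nontrivial element. -/
def toZ2 (g : ℕ) : FreeProdZ2 g →* Multiplicative (ZMod 2) :=
  Monoid.CoprodI.lift (fun _ : Fin (g + 1) => MonoidHom.id (Multiplicative (ZMod 2)))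

/-- The homomorphism from the free group on `g` letters sending the `i`-th letter to `sᵢ·s₀`
(for `i = 1, …, g`). -/
def freeToKer (g : ℕ) : FreeGroup (Fin g) →* FreeProdZ2 g :=
  FreeGroup.lift (fun i : Fin g => sGen g i.succ * sGen g 0)

namespace WhitAux

open Multiplicative SemidirectProduct

def sq2hom {M : Type*} [Monoid M] (m : M) (h : m * m = 1) : Multiplicative (ZMod 2) →* M where
  toFun x := if x.toAdd = 0 then 1 else m
  map_one' := by simp
  map_mul' x y := by
    have h2 : ∀ a : ZMod 2, a = 0 ∨ a = 1 := by decide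
    have e1 : (1 : ZMod 2) ≠ 0 := by decide
    have e2 : (1 + 1 : ZMod 2) = 0 := by decide
    rcases h2 x.toAdd with hx | hx <;> rcases h2 y.toAdd with hy | hy <;>
      simp [toAdd_mul, hx, hy, e1, e2, h]

@[simp] lemma sq2hom_apply_one {M : Type*} [Monoid M] (m : M) (h : m * m = 1) :
    sq2hom m h (ofAdd (1 : ZMod 2)) = m := by
  have e1 : (1 : ZMod 2) ≠ 0 := by decide
  simp [sq2hom, e1]

lemma sGen_sq (g : ℕ) (i : Fin (g + 1)) : sGen g i * sGen g i = 1 := by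
  have e2 : ofAdd (1 : ZMod 2) * ofAdd (1 : ZMod 2) = 1 := by decide
  rw [sGen, ← map_mul, e2, map_one]

lemma sGen_inv (g : ℕ) (i : Fin (g + 1)) : (sGen g i)⁻¹ = sGen g i :=
  inv_eq_of_mul_eq_one_right (sGen_sq g i)

variable (g : ℕ)

def invHom : FreeGroup (Fin g) →* FreeGroup (Fin g) :=
  FreeGroup.lift (fun i => (FreeGroup.of i)⁻¹)

@[simp] lemma invHom_of (i : Fin g) : invHom g (FreeGroup.of i) = (FreeGroup.of i)⁻¹ := by
  simp [invHom]

lemma invHom_invHom : (invHom g).comp (invHom g) = MonoidHom.id _ := by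
  apply FreeGroup.ext_hom
  intro a
  simp [invHom]

def invAut : MulAut (FreeGroup (Fin g)) :=
  MonoidHom.toMulEquiv (invHom g) (invHom g) (invHom_invHom g) (invHom_invHom g)

lemma invAut_sq : invAut g * invAut g = 1 := by
  apply MulEquiv.ext
  intro x
  have := DFunLike.congr_fun (invHom_invHom g) x
  simpa [invAut, MulAut.mul_apply] using this

def actZ2 : Multiplicative (ZMod 2) →* MulAut (FreeGroup (Fin g)) :=
  sq2hom (invAut g) (invAut_sq g)

abbrev SD : Type := FreeGroup (Fin g) ⋊[actZ2 g] Multiplicative (ZMod 2)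

lemma tsq : (inr (ofAdd (1 : ZMod 2)) : SD g) * inr (ofAdd (1 : ZMod 2)) = 1 := by
  rw [← map_mul]
  have : ofAdd (1 : ZMod 2) * ofAdd (1 : ZMod 2) = 1 := by decide
  rw [this, map_one]

lemma gen_sq (w : FreeGroup (Fin g)) (hw : w * invHom g w = 1) :
    (inl w * inr (ofAdd (1 : ZMod 2)) : SD g) * (inl w * inr (ofAdd (1 : ZMod 2))) = 1 := by
  have key : (inr (ofAdd (1 : ZMod 2)) : SD g) * inl w =
      inl (invHom g w) * inr (ofAdd (1 : ZMod 2)) := by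
    have := inl_aut (φ := actZ2 g) (ofAdd (1 : ZMod 2)) w
    have hact : actZ2 g (ofAdd (1 : ZMod 2)) w = invHom g w := by
      simp [actZ2, invAut]
    rw [hact] at this
    rw [this]
    simp [mul_assoc, ← map_mul]
  calc (inl w * inr (ofAdd (1 : ZMod 2)) : SD g) * (inl w * inr (ofAdd (1 : ZMod 2)))
      = inl w * (inr (ofAdd (1 : ZMod 2)) * inl w) * inr (ofAdd (1 : ZMod 2)) := by group
    _ = inl w * (inl (invHom g w) * inr (ofAdd (1 : ZMod 2))) * inr (ofAdd (1 : ZMod 2)) := by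
        rw [key]
    _ = inl (w * invHom g w) * (inr (ofAdd (1 : ZMod 2)) * inr (ofAdd (1 : ZMod 2))) := by
        rw [map_mul]; group
    _ = 1 := by rw [hw, tsq, map_one, one_mul]

end WhitAux

namespace WhitAux2
open WhitAux Multiplicative SemidirectProduct

variable (g : ℕ)

def wGen (j : Fin (g + 1)) : FreeGroup (Fin g) :=
  if h : j = 0 then 1 else FreeGroup.of (j.pred h)

lemma wGen_prop (j : Fin (g + 1)) : wGen g j * invHom g (wGen g j) = 1 := by
  unfold wGen
  split <;> simp

def theta : FreeProdZ2 g →* SD g :=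
  Monoid.CoprodI.lift (fun j => sq2hom (inl (wGen g j) * inr (ofAdd (1 : ZMod 2)))
    (gen_sq g _ (wGen_prop g j)))

lemma theta_sGen (j : Fin (g + 1)) :
    theta g (sGen g j) = inl (wGen g j) * inr (ofAdd (1 : ZMod 2)) := by
  rw [sGen, theta, Monoid.CoprodI.lift_of, sq2hom_apply_one]

lemma theta_comp_freeToKer : (theta g).comp (freeToKer g) = inl := by
  apply FreeGroup.ext_hom
  intro i
  have h0 : wGen g 0 = 1 := by simp [wGen]
  have hi : wGen g i.succ = FreeGroup.of i := by
    rw [wGen, dif_neg (Fin.succ_ne_zero i)]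
    simp [Fin.pred_succ]
  have hf : freeToKer g (FreeGroup.of i) = sGen g i.succ * sGen g 0 := FreeGroup.lift_apply_of
  rw [MonoidHom.comp_apply, hf, map_mul, theta_sGen, theta_sGen, h0, hi,
    show (inl (1 : FreeGroup (Fin g)) : SD g) = 1 from map_one inl, one_mul,
    mul_assoc, tsq, mul_one]

lemma rightHom_comp_theta : (rightHom).comp (theta g) = toZ2 g := by
  apply Monoid.CoprodI.ext_hom
  intro i
  apply MonoidHom.ext
  intro x
  have h2 : ∀ a : Multiplicative (ZMod 2), a = 1 ∨ a = ofAdd 1 := by decide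
  rcases h2 x with hx | hx <;> subst hx
  · simp
  · show rightHom (theta g (sGen g i)) = toZ2 g (sGen g i)
    rw [theta_sGen, map_mul, rightHom_inl, rightHom_inr, one_mul, sGen, toZ2,
      Monoid.CoprodI.lift_of]
    rfl

lemma conj_freeToKer (w : FreeGroup (Fin g)) :
    freeToKer g (invHom g w) = sGen g 0 * freeToKer g w * (sGen g 0)⁻¹ := by
  have key : (freeToKer g).comp (invHom g) =
      ((MulAut.conj (sGen g 0)).toMonoidHom).comp (freeToKer g) := by
    apply FreeGroup.ext_hom
    intro i
    simp only [MonoidHom.comp_apply, invHom_of, map_inv, MulEquiv.coe_toMonoidHom,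
      MulAut.conj_apply]
    have hf : freeToKer g (FreeGroup.of i) = sGen g i.succ * sGen g 0 := FreeGroup.lift_apply_of
    rw [hf, mul_inv_rev, sGen_inv]
    simp [mul_assoc, sGen_sq, sGen_inv]
  exact DFunLike.congr_fun key w

def psi : SD g →* FreeProdZ2 g :=
  SemidirectProduct.lift (freeToKer g) (sq2hom (sGen g 0) (sGen_sq g 0)) (by
    intro z
    have h2 : ∀ a : Multiplicative (ZMod 2), a = 1 ∨ a = ofAdd 1 := by decide
    rcases h2 z with hz | hz <;> subst hz
    · apply MonoidHom.ext; intro x; simp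
    · apply MonoidHom.ext
      intro x
      have hact : actZ2 g (ofAdd 1) x = invHom g x := by simp [actZ2, invAut]
      simp only [MonoidHom.comp_apply, MulEquiv.coe_toMonoidHom, hact, sq2hom_apply_one,
        MulAut.conj_apply]
      exact conj_freeToKer g x)

lemma psi_comp_theta : (psi g).comp (theta g) = MonoidHom.id _ := by
  apply Monoid.CoprodI.ext_hom
  intro i
  apply MonoidHom.ext
  intro x
  have h2 : ∀ a : Multiplicative (ZMod 2), a = 1 ∨ a = ofAdd 1 := by decide
  rcases h2 x with hx | hx <;> subst hx
  · simp
  · show psi g (theta g (sGen g i)) = sGen g i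
    rw [theta_sGen, map_mul, psi, SemidirectProduct.lift_inl, SemidirectProduct.lift_inr,
      sq2hom_apply_one]
    by_cases h : i = 0
    · subst h; simp [wGen]
    · rw [wGen, dif_neg h]
      have hf : freeToKer g (FreeGroup.of (i.pred h)) = sGen g (i.pred h).succ * sGen g 0 :=
        FreeGroup.lift_apply_of
      rw [hf, mul_assoc, sGen_sq, mul_one, Fin.succ_pred]

end WhitAux2


open WhitAux WhitAux2 SemidirectProduct in
/-- Let `g ≥ 1` and let `G` be the free product of `g + 1` copies of `ℤ/2ℤ`
with canonical generators `s₀, …, s_g`. Let `φ : G → ℤ/2ℤ` send every `sᵢ` to the nontrivial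
element. Then `ker φ` is free of rank `g`, freely generated by `s₁s₀, …, s_g s₀`: the
homomorphism from the free group on `g` letters sending the `i`-th letter to `sᵢs₀` is
injective with range exactly `ker φ`. -/
theorem whittaker_kernel_free (g : ℕ) (hg : 1 ≤ g) :
    Function.Injective (freeToKer g) ∧ (freeToKer g).range = (toZ2 g).ker := by
  have hθf : ∀ u, theta g (freeToKer g u) = inl u :=
    fun u => DFunLike.congr_fun (theta_comp_freeToKer g) u
  have hπ : ∀ x, rightHom (theta g x) = toZ2 g x :=
    fun x => DFunLike.congr_fun (rightHom_comp_theta g) x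
  have hψ : ∀ x, psi g (theta g x) = x :=
    fun x => DFunLike.congr_fun (psi_comp_theta g) x
  have hθinj : Function.Injective (theta g) := fun a b h => by
    rw [← hψ a, ← hψ b, h]
  constructor
  · intro a b h
    have h2 := congrArg (theta g) h
    rw [hθf, hθf] at h2
    exact SemidirectProduct.inl_injective h2
  · ext x
    simp only [MonoidHom.mem_range, MonoidHom.mem_ker]
    constructor
    · rintro ⟨u, rfl⟩
      rw [← hπ, hθf u, rightHom_inl]
    · intro hx
      refine ⟨(theta g x).left, ?_⟩
      apply hθinj
      rw [hθf]
      have h1 : (theta g x).right = 1 := by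
        have h2 := hπ x
        rw [hx] at h2
        exact h2
      conv_rhs => rw [← inl_left_mul_inr_right (theta g x)]
      rw [h1, map_one, mul_one]
end
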